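/- arXiv:1505.04330 — 2 statements merged into one kernel-verified Lean document; each statement's English description precedes it below -/
import Mathlib

section
/- Let G be a symmetric monoidal closed groupoid, i.e. a symmetric monoidal closed category in which every morphism is invertible. Then G is compact closed: setting A* := (A ⊸ I), every object A has A* as a dual object (there are unit and counit morphisms exhibiting the duality, satisfying the snake equations). -/
/-!
Take `ε : A ⊗ (A ⊸ 𝟙) ⟶ 𝟙` to be evaluation; in a groupoid it is invertible, and so is the unit
of the adjunction `A ⊗ - ⊣ A ⊸ -`, which makes `A ⊗ -` full. The candidate coevaluation
`ε⁻¹ ≫ β` has an invertible first snake composite `u`, and by fullness `(ρ ≫ λ⁻¹) ≫ u⁻¹ = A ◁ t`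
for a scalar `t`; precomposing the coevaluation with `t` makes the first snake equation hold. The first snake equation makes the second snake composite `w` satisfy
`w ≫ (ρ ≫ λ⁻¹) ≫ w = w`, so `w` is `(ρ ≫ λ⁻¹)⁻¹` as soon as it is epi, which it is in a groupoid.
-/

open CategoryTheory MonoidalCategory

universe v u

section

variable {C : Type u} [Category.{v} C] [MonoidalCategory C] {A B : C}

theorem evaluation_coevaluation_idem (ε : A ⊗ B ⟶ 𝟙_ C) (η : 𝟙_ C ⟶ B ⊗ A)
    (h : A ◁ η ≫ (α_ A B A).inv ≫ ε ▷ A = (ρ_ A).hom ≫ (λ_ A).inv) :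
    (η ▷ B ≫ (α_ B A B).hom ≫ B ◁ ε) ≫ (ρ_ B).hom ≫ (λ_ B).inv ≫
      (η ▷ B ≫ (α_ B A B).hom ≫ B ◁ ε) = η ▷ B ≫ (α_ B A B).hom ≫ B ◁ ε := by
  have h' : A ◁ η ⊗≫ ε ▷ A = ⊗𝟙.hom := by
    convert h <;> simp [monoidalComp]
  -- Interchange moves the inner `ε` and `η` past each other until a first snake composite appears.
  calc _ = 𝟙 _ ⊗≫ η ▷ B ⊗≫ (𝟙_ C ◁ (B ◁ ε) ≫ η ▷ (B ⊗ 𝟙_ C)) ⊗≫ B ◁ ε := by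
          monoidal
    _ = 𝟙 _ ⊗≫ (𝟙_ C ◁ (η ▷ B) ≫ η ▷ ((B ⊗ A) ⊗ B)) ⊗≫ (B ⊗ A) ◁ (B ◁ ε) ⊗≫ B ◁ ε := by
          rw [whisker_exchange]; monoidal
    _ = 𝟙 _ ⊗≫ η ▷ (𝟙_ C ⊗ B) ⊗≫ (B ⊗ A) ◁ (η ▷ B) ⊗≫
          ((B ⊗ (A ⊗ B)) ◁ ε ≫ (B ◁ ε) ▷ (𝟙_ C)) ⊗≫ 𝟙 _ := by
          rw [whisker_exchange]; monoidal
    _ = 𝟙 _ ⊗≫ η ▷ (𝟙_ C ⊗ B) ⊗≫ B ◁ ((A ◁ η ⊗≫ ε ▷ A) ▷ B) ⊗≫ (B ⊗ 𝟙_ C) ◁ ε ⊗≫ 𝟙 _ := by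
          rw [whisker_exchange]; monoidal
    _ = _ := by rw [h']; monoidal

theorem evaluation_coevaluation_of_epi (ε : A ⊗ B ⟶ 𝟙_ C) (η : 𝟙_ C ⟶ B ⊗ A)
    (h : A ◁ η ≫ (α_ A B A).inv ≫ ε ▷ A = (ρ_ A).hom ≫ (λ_ A).inv)
    [Epi (η ▷ B ≫ (α_ B A B).hom ≫ B ◁ ε)] :
    η ▷ B ≫ (α_ B A B).hom ≫ B ◁ ε = (λ_ B).hom ≫ (ρ_ B).inv := by
  have hinv : ((ρ_ B).hom ≫ (λ_ B).inv) ≫ (η ▷ B ≫ (α_ B A B).hom ≫ B ◁ ε) = 𝟙 _ := by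
    rw [← cancel_epi (η ▷ B ≫ (α_ B A B).hom ≫ B ◁ ε), Category.comp_id]
    simpa only [Category.assoc] using evaluation_coevaluation_idem ε η h
  rw [← IsIso.inv_eq_of_hom_inv_id hinv]
  simp

theorem exists_coevaluation_evaluation_of_full [(tensorLeft A).Full]
    (ε : A ⊗ B ⟶ 𝟙_ C) (η₀ : 𝟙_ C ⟶ B ⊗ A) [IsIso (A ◁ η₀ ≫ (α_ A B A).inv ≫ ε ▷ A)] :
    ∃ η : 𝟙_ C ⟶ B ⊗ A, A ◁ η ≫ (α_ A B A).inv ≫ ε ▷ A = (ρ_ A).hom ≫ (λ_ A).inv := by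
  let t : 𝟙_ C ⟶ 𝟙_ C :=
    (tensorLeft A).preimage (((ρ_ A).hom ≫ (λ_ A).inv) ≫ inv (A ◁ η₀ ≫ (α_ A B A).inv ≫ ε ▷ A))
  have ht : A ◁ t = ((ρ_ A).hom ≫ (λ_ A).inv) ≫ inv (A ◁ η₀ ≫ (α_ A B A).inv ≫ ε ▷ A) :=
    (tensorLeft A).map_preimage _
  refine ⟨t ≫ η₀, ?_⟩
  rw [MonoidalCategory.whiskerLeft_comp, ht]
  simp

end

/-- a symmetric monoidal closed groupoid (every morphism invertible) is
compact closed: every object `A` has `A* := A ⊸ 𝟙` as a dual object, i.e. there are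
unit and counit morphisms satisfying the snake equations (an exact pairing). -/
theorem symmetric_monoidal_closed_groupoid_compact (C : Type u) [Category.{v} C]
    [MonoidalCategory C] [SymmetricCategory C] [MonoidalClosed C]
    (hgrpd : ∀ {X Y : C} (f : X ⟶ Y), IsIso f) (A : C) :
    Nonempty (ExactPairing ((ihom A).obj (𝟙_ C)) A) := by
  let ε : A ⊗ (ihom A).obj (𝟙_ C) ⟶ 𝟙_ C := (ihom.ev A).app (𝟙_ C)
  have : IsIso ε := hgrpd ε
  have : ∀ X, IsIso ((ihom.adjunction A).unit.app X) := fun _ => hgrpd _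
  have : (tensorLeft A).Full := (ihom.adjunction A).full_L_of_isSplitEpi_unit_app
  have : IsIso (A ◁ (inv ε ≫ (β_ _ _).hom) ≫ (α_ _ _ _).inv ≫ ε ▷ A) := hgrpd _
  obtain ⟨η, hη⟩ := exists_coevaluation_evaluation_of_full ε (inv ε ≫ (β_ _ _).hom)
  have : Epi (η ▷ _ ≫ (α_ _ _ _).hom ≫ _ ◁ ε) := (hgrpd _).epi_of_iso
  exact ⟨{ coevaluation' := η
           evaluation' := ε
           coevaluation_evaluation' := hη
           evaluation_coevaluation' := evaluation_coevaluation_of_epi ε η hη }⟩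
end

section
/- Let (B, m, u) be a monoid in a monoidal dagger category C, and consider the monad T = − ⊗ B on C with T(A) = A ⊗ B, μ_A = (id_A ⊗ m) ∘ α_{A,B,B} and η_A = (id_A ⊗ u) ∘ ρ_A⁻¹. Then T is a Frobenius monad if and only if (B, m, u) is a Frobenius monoid; in that case T is a strong Frobenius monad, with (unitary) strength st_{A,B'} given by the associator α : A ⊗ (B' ⊗ B) → (A ⊗ B') ⊗ B. -/
/-!
Up to conjugation by the associator `α_{A,B,B}`, the two sides of the Frobenius law of the
monad `− ⊗ B` at `A` are `A ◁ −` applied to the two sides of the Frobenius law of `(B, m)`.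
Hence the monoid law gives the monad law at every `A`, and the monad law at `A = 𝟙_ C`
gives back the monoid law because `𝟙_ C ◁ −` is faithful. The functor `− ⊗ B` commutes with
the dagger since the dagger preserves tensor products and identities. The strength laws are
coherence identities, and the strength is unitary because the associator is.
-/

open CategoryTheory Category MonoidalCategory

universe v u

/-- A dagger structure on a category: a contravariant, identity-on-objects,
involutive operation on morphisms. -/
class DaggerStruct (C : Type u) [Category.{v} C] where
  dag : ∀ {X Y : C}, (X ⟶ Y) → (Y ⟶ X)
  dag_dag : ∀ {X Y : C} (f : X ⟶ Y), dag (dag f) = f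
  dag_id : ∀ X : C, dag (𝟙 X) = 𝟙 X
  dag_comp : ∀ {X Y Z : C} (f : X ⟶ Y) (g : Y ⟶ Z), dag (f ≫ g) = dag g ≫ dag f

notation:max f "†" => DaggerStruct.dag f

/-- A monoidal dagger category: the dagger cooperates with the monoidal structure. -/
class MonoidalDagger (C : Type u) [Category.{v} C] [MonoidalCategory C] extends
    DaggerStruct C where
  dag_tensor : ∀ {X₁ Y₁ X₂ Y₂ : C} (f : X₁ ⟶ Y₁) (g : X₂ ⟶ Y₂), (f ⊗ₘ g)† = f† ⊗ₘ g†
  assoc_unitary : ∀ X Y Z : C, ((α_ X Y Z).hom)† = (α_ X Y Z).inv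
  lunitor_unitary : ∀ X : C, ((λ_ X).hom)† = (λ_ X).inv
  runitor_unitary : ∀ X : C, ((ρ_ X).hom)† = (ρ_ X).inv

/-- A symmetric monoidal dagger category: additionally the symmetries are unitary. -/
class SymmetricDagger (C : Type u) [Category.{v} C] [MonoidalCategory C]
    [SymmetricCategory C] extends MonoidalDagger C where
  braiding_unitary : ∀ X Y : C, ((β_ X Y).hom)† = (β_ X Y).inv

/-- A monoid object, given by explicit data. -/
structure IsMonoidObj {C : Type u} [Category.{v} C] [MonoidalCategory C] (A : C)
    (m : A ⊗ A ⟶ A) (u : 𝟙_ C ⟶ A) : Prop where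
  mul_assoc : (m ⊗ₘ 𝟙 A) ≫ m = (α_ A A A).hom ≫ (𝟙 A ⊗ₘ m) ≫ m
  one_mul : (u ⊗ₘ 𝟙 A) ≫ m = (λ_ A).hom
  mul_one : (𝟙 A ⊗ₘ u) ≫ m = (ρ_ A).hom

/-- A Frobenius monoid in a monoidal dagger category. -/
structure IsFrobeniusMonoid {C : Type u} [Category.{v} C] [MonoidalCategory C]
    [MonoidalDagger C] (A : C) (m : A ⊗ A ⟶ A) (u : 𝟙_ C ⟶ A) extends
    IsMonoidObj A m u : Prop where
  frobenius : (m† ⊗ₘ 𝟙 A) ≫ (α_ A A A).hom ≫ (𝟙 A ⊗ₘ m) =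
    (𝟙 A ⊗ₘ m†) ≫ (α_ A A A).inv ≫ (m ⊗ₘ 𝟙 A)

/-- A Frobenius monad on a dagger category. -/
structure IsFrobeniusMonad {C : Type u} [Category.{v} C] [DaggerStruct C]
    (T : Monad C) : Prop where
  map_dag : ∀ {X Y : C} (f : X ⟶ Y), T.map (f†) = (T.map f)†
  frobenius : ∀ A : C,
    ((T.μ.app (T.obj A))†) ≫ T.map (T.μ.app A) =
      T.map ((T.μ.app A)†) ≫ T.μ.app (T.obj A)

variable {C : Type u} [Category.{v} C] [MonoidalCategory C]

/-- Multiplication `μ_A = (id_A ⊗ m) ∘ α_{A,B,B}` of the writer monad `− ⊗ B`. -/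
def wMu (B : C) (m : B ⊗ B ⟶ B) (A : C) : (A ⊗ B) ⊗ B ⟶ A ⊗ B :=
  (α_ A B B).hom ≫ (𝟙 A ⊗ₘ m)

/-- Unit `η_A = (id_A ⊗ u) ∘ ρ_A⁻¹` of the writer monad `− ⊗ B`. -/
def wEta (B : C) (u : 𝟙_ C ⟶ B) (A : C) : A ⟶ A ⊗ B :=
  (ρ_ A).inv ≫ (𝟙 A ⊗ₘ u)

/-- Strength `st_{X,A} : X ⊗ (A ⊗ B) ⟶ (X ⊗ A) ⊗ B` of the writer monad, given by the
associator. -/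
def wSt (B : C) (X A : C) : X ⊗ (A ⊗ B) ⟶ (X ⊗ A) ⊗ B :=
  (α_ X A B).inv

section WriterMonad

variable [MonoidalDagger C]

lemma dag_tensor_id {X Y : C} (f : X ⟶ Y) (B : C) : (f ⊗ₘ 𝟙 B)† = f† ⊗ₘ 𝟙 B := by
  rw [MonoidalDagger.dag_tensor, DaggerStruct.dag_id]

lemma dag_wMu {B : C} (m : B ⊗ B ⟶ B) (A : C) :
    (wMu B m A)† = (𝟙 A ⊗ₘ m†) ≫ (α_ A B B).inv := by
  rw [wMu, DaggerStruct.dag_comp, MonoidalDagger.dag_tensor, DaggerStruct.dag_id,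
    MonoidalDagger.assoc_unitary]

lemma dag_wMu_comp_wMu_tensor_id {B : C} (m : B ⊗ B ⟶ B) (A : C) :
    (wMu B m (A ⊗ B))† ≫ (wMu B m A ⊗ₘ 𝟙 B) =
      (α_ A B B).hom ≫ A ◁ ((𝟙 B ⊗ₘ m†) ≫ (α_ B B B).inv ≫ (m ⊗ₘ 𝟙 B)) ≫ (α_ A B B).inv := by
  rw [dag_wMu, wMu]
  monoidal

lemma dag_wMu_tensor_id_comp_wMu {B : C} (m : B ⊗ B ⟶ B) (A : C) :
    ((wMu B m A)† ⊗ₘ 𝟙 B) ≫ wMu B m (A ⊗ B) =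
      (α_ A B B).hom ≫ A ◁ ((m† ⊗ₘ 𝟙 B) ≫ (α_ B B B).hom ≫ (𝟙 B ⊗ₘ m)) ≫ (α_ A B B).inv := by
  rw [dag_wMu, wMu]
  monoidal

lemma wMu_frobenius_iff {B : C} (m : B ⊗ B ⟶ B) (A : C) :
    (wMu B m (A ⊗ B))† ≫ (wMu B m A ⊗ₘ 𝟙 B) = ((wMu B m A)† ⊗ₘ 𝟙 B) ≫ wMu B m (A ⊗ B) ↔
      A ◁ ((𝟙 B ⊗ₘ m†) ≫ (α_ B B B).inv ≫ (m ⊗ₘ 𝟙 B)) =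
        A ◁ ((m† ⊗ₘ 𝟙 B) ≫ (α_ B B B).hom ≫ (𝟙 B ⊗ₘ m)) := by
  rw [dag_wMu_comp_wMu_tensor_id, dag_wMu_tensor_id_comp_wMu, cancel_epi, cancel_mono]

lemma frobenius_of_wMu_frobenius {B : C} {m : B ⊗ B ⟶ B}
    (h : (wMu B m (𝟙_ C ⊗ B))† ≫ (wMu B m (𝟙_ C) ⊗ₘ 𝟙 B) =
      ((wMu B m (𝟙_ C))† ⊗ₘ 𝟙 B) ≫ wMu B m (𝟙_ C ⊗ B)) :
    (m† ⊗ₘ 𝟙 B) ≫ (α_ B B B).hom ≫ (𝟙 B ⊗ₘ m) = (𝟙 B ⊗ₘ m†) ≫ (α_ B B B).inv ≫ (m ⊗ₘ 𝟙 B) :=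
  ((whiskerLeft_iff _ _).mp ((wMu_frobenius_iff m (𝟙_ C)).mp h)).symm

end WriterMonad

lemma wSt_assoc (B X Y Z : C) :
    (α_ X Y (Z ⊗ B)).inv ≫ wSt B (X ⊗ Y) Z =
      (𝟙 X ⊗ₘ wSt B Y Z) ≫ wSt B X (Y ⊗ Z) ≫ ((α_ X Y Z).inv ⊗ₘ 𝟙 B) := by
  simp only [wSt]
  monoidal

lemma wSt_leftUnitor (B A : C) : wSt B (𝟙_ C) A ≫ ((λ_ A).hom ⊗ₘ 𝟙 B) = (λ_ (A ⊗ B)).hom := by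
  simp only [wSt]
  monoidal

lemma wSt_wMu {B : C} (m : B ⊗ B ⟶ B) (X A : C) :
    (𝟙 X ⊗ₘ wMu B m A) ≫ wSt B X A = wSt B X (A ⊗ B) ≫ (wSt B X A ⊗ₘ 𝟙 B) ≫ wMu B m (X ⊗ A) := by
  simp only [wSt, wMu]
  monoidal

lemma wSt_wEta {B : C} (u : 𝟙_ C ⟶ B) (X A : C) :
    (𝟙 X ⊗ₘ wEta B u A) ≫ wSt B X A = wEta B u (X ⊗ A) := by
  simp only [wSt, wEta]
  monoidal

lemma dag_wSt [MonoidalDagger C] (B X A : C) : (wSt B X A)† = (α_ X A B).hom := by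
  rw [wSt, ← MonoidalDagger.assoc_unitary, DaggerStruct.dag_dag]

/-- for a monoid `(B, m, u)` in a monoidal dagger category, the writer monad
`T = − ⊗ B` is a Frobenius monad (i.e. `T` is a dagger functor satisfying the Frobenius
law) if and only if `(B, m, u)` is a Frobenius monoid; and in that case `T` is a strong
Frobenius monad, with unitary strength given by the associator. -/
theorem writer_frobenius_monad_iff {B : C} {m : B ⊗ B ⟶ B} {u : 𝟙_ C ⟶ B}
    [MonoidalDagger C] (hM : IsMonoidObj B m u) :
    (((∀ {X Y : C} (f : X ⟶ Y), ((f ⊗ₘ 𝟙 B)†) = (f†) ⊗ₘ 𝟙 B) ∧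
      (∀ A : C, ((wMu B m (A ⊗ B))†) ≫ (wMu B m A ⊗ₘ 𝟙 B) =
        ((wMu B m A)† ⊗ₘ 𝟙 B) ≫ wMu B m (A ⊗ B))) ↔
      IsFrobeniusMonoid B m u) ∧
    (IsFrobeniusMonoid B m u →
      ((∀ X Y Z : C, (α_ X Y (Z ⊗ B)).inv ≫ wSt B (X ⊗ Y) Z =
          (𝟙 X ⊗ₘ wSt B Y Z) ≫ wSt B X (Y ⊗ Z) ≫ ((α_ X Y Z).inv ⊗ₘ 𝟙 B)) ∧
       (∀ A : C, wSt B (𝟙_ C) A ≫ ((λ_ A).hom ⊗ₘ 𝟙 B) = (λ_ (A ⊗ B)).hom) ∧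
       (∀ X A : C, (𝟙 X ⊗ₘ wMu B m A) ≫ wSt B X A =
          wSt B X (A ⊗ B) ≫ (wSt B X A ⊗ₘ 𝟙 B) ≫ wMu B m (X ⊗ A)) ∧
       (∀ X A : C, (𝟙 X ⊗ₘ wEta B u A) ≫ wSt B X A = wEta B u (X ⊗ A)) ∧
       (∀ X A : C, ((wSt B X A)†) = (α_ X A B).hom))) := by
  refine ⟨⟨fun ⟨_, hFrob⟩ => ⟨hM, frobenius_of_wMu_frobenius (hFrob _)⟩,
      fun hF => ⟨fun f => dag_tensor_id f B,
        fun A => (wMu_frobenius_iff m A).mpr (by rw [hF.frobenius])⟩⟩,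
    fun _ => ⟨wSt_assoc B, wSt_leftUnitor B, wSt_wMu m, wSt_wEta u, dag_wSt B⟩⟩
end
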